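/- Let the marginal distributions be F_j = U[0, b_j] (uniform on [0, b_j]) with b_j > 0 for j = 1,...,n. Then a single price is max-min optimal: there exist an item j and a finite price x such that the pricing p with p_j = x and p_i = ∞ for all i ≠ j satisfies R(p) = R*. -/

import Mathlib

open MeasureTheory
open scoped ENNReal NNReal

noncomputable section

/-- A buyer's purchase rule for `n` items: given a valuation profile and a vector of item prices
(in `[0,∞]`), `choose` returns the purchased item (or `none` if nothing is purchased).
The axioms say: a purchased item has a finite price and yields nonnegative utility
(`feasible`), the purchased item maximizes utility among all items (`optimal`), and the buyer
does purchase whenever some item yields nonnegative utility (`active`). Ties among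
utility-maximizing items are broken according to the (fixed) rule embodied by `choose`. -/
structure BuyerRule (n : ℕ) where
  choose : (Fin n → ℝ) → (Fin n → ℝ≥0∞) → Option (Fin n)
  feasible : ∀ v p j, choose v p = some j → p j ≠ ⊤ ∧ (p j).toReal ≤ v j
  optimal : ∀ v p j k, choose v p = some j → p k ≠ ⊤ →
      v k - (p k).toReal ≤ v j - (p j).toReal
  active : ∀ v p, (∃ k, p k ≠ ⊤ ∧ (p k).toReal ≤ v k) → (choose v p).isSome = true

/-- The seller's revenue from valuation profile `v` under pricing `p`. -/
def BuyerRule.revenue {n : ℕ} (B : BuyerRule n) (p : Fin n → ℝ≥0∞) (v : Fin n → ℝ) : ℝ≥0∞ :=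
  (B.choose v p).elim 0 (fun j => p j)

/-- A joint distribution `F` on valuation profiles is compatible with the marginals `marg`
if it is a probability measure whose `j`-th one-dimensional marginal is `marg j` for every `j`. -/
def Compatible {n : ℕ} (marg : Fin n → Measure ℝ) (F : Measure (Fin n → ℝ)) : Prop :=
  IsProbabilityMeasure F ∧ ∀ j, F.map (fun v => v j) = marg j

/-- `R(p,F)`: the expected revenue of pricing `p` under joint distribution `F`. -/
def expRev {n : ℕ} (B : BuyerRule n) (p : Fin n → ℝ≥0∞) (F : Measure (Fin n → ℝ)) : ℝ≥0∞ :=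
  ∫⁻ v, B.revenue p v ∂F

/-- `R(p)`: the robust revenue guarantee of `p`, the infimum of `R(p,F)` over compatible `F`. -/
def robustRev {n : ℕ} (B : BuyerRule n) (marg : Fin n → Measure ℝ) (p : Fin n → ℝ≥0∞) : ℝ≥0∞ :=
  ⨅ (F : Measure (Fin n → ℝ)) (_ : Compatible marg F), expRev B p F

/-- `R*`: the optimal robust revenue guarantee over all pricings. -/
def optRobust {n : ℕ} (B : BuyerRule n) (marg : Fin n → Measure ℝ) : ℝ≥0∞ :=
  ⨆ p : Fin n → ℝ≥0∞, robustRev B marg p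

/-- The uniform distribution on `[a,b]`. -/
def unif (a b : ℝ) : Measure ℝ :=
  (ENNReal.ofReal (b - a))⁻¹ • volume.restrict (Set.Icc a b)

/-!
Let `M = max_j b_j`, attained at `J`. The single price `M/2` on `J` sells exactly when
`v_J ≥ M/2`, an event of probability `1/2` under every compatible distribution, so it guarantees
`M/4`. Conversely, no pricing earns more than `M/4` under the comonotone coupling `v = u • b`,
`u ~ U[0,1]`: the buyer's utility `U(u)` is the upper envelope of the lines `b_j u - p_j` and `0`,
its right derivative `q(u)` is at least the slope of the purchased line, so the revenue is at most
`u q(u) - U(u)`. Integrating by parts, `∫₀¹ (u q - U) = U(1) - 2 ∫₀¹ U`, and `U ≥ 0` together with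
`U(u) ≥ U(1) - M (1 - u)` on `[1/2, 1]` bounds this by `M/4`.
-/

open Set Filter Topology

section UpperEnvelope

open Finset

variable {ι : Type*} [Fintype ι] [Nonempty ι]

def upperEnvelope (a c : ι → ℝ) (u : ℝ) : ℝ :=
  univ.sup' univ_nonempty fun k => a k * u - c k

variable {a c : ι → ℝ}

lemma le_upperEnvelope (k : ι) (u : ℝ) : a k * u - c k ≤ upperEnvelope a c u :=
  le_sup' (fun k => a k * u - c k) (mem_univ k)

lemma exists_eq_upperEnvelope (u : ℝ) : ∃ k, a k * u - c k = upperEnvelope a c u := by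
  obtain ⟨k, -, hk⟩ := exists_mem_eq_sup' univ_nonempty fun k => a k * u - c k
  exact ⟨k, hk.symm⟩

lemma continuous_upperEnvelope : Continuous (upperEnvelope a c) :=
  Continuous.finset_sup'_apply univ_nonempty fun k _ => by fun_prop

lemma upperEnvelope_sub_le {M u v : ℝ} (ha : ∀ k, a k ≤ M) (huv : u ≤ v) :
    upperEnvelope a c v - M * (v - u) ≤ upperEnvelope a c u := by
  obtain ⟨k, hk⟩ := exists_eq_upperEnvelope (a := a) (c := c) v
  nlinarith [le_upperEnvelope (a := a) (c := c) k u, ha k]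

lemma nonempty_active (a c : ι → ℝ) (u : ℝ) :
    (univ.filter fun k => a k * u - c k = upperEnvelope a c u).Nonempty := by
  obtain ⟨k, hk⟩ := exists_eq_upperEnvelope (a := a) (c := c) u
  exact ⟨k, mem_filter.2 ⟨mem_univ k, hk⟩⟩

def activeSlope (a c : ι → ℝ) (u : ℝ) : ℝ :=
  (univ.filter fun k => a k * u - c k = upperEnvelope a c u).sup' (nonempty_active a c u) a

lemma le_activeSlope {k : ι} {u : ℝ} (hk : a k * u - c k = upperEnvelope a c u) :
    a k ≤ activeSlope a c u :=
  le_sup' a (mem_filter.2 ⟨mem_univ k, hk⟩)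

lemma exists_activeSlope_eq (u : ℝ) :
    ∃ k, a k * u - c k = upperEnvelope a c u ∧ a k = activeSlope a c u := by
  obtain ⟨k, hk, hka⟩ := exists_mem_eq_sup' (nonempty_active a c u) a
  exact ⟨k, (mem_filter.1 hk).2, hka.symm⟩

lemma monotone_activeSlope : Monotone (activeSlope a c) := by
  intro u v huv
  obtain ⟨k, hk, hka⟩ := exists_activeSlope_eq (a := a) (c := c) u
  obtain ⟨l, hl, hla⟩ := exists_activeSlope_eq (a := a) (c := c) v
  by_contra! hlt
  -- the steeper line `k`, maximal at `u`, stays maximal at `v ≥ u`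
  have hkv : a k * v - c k = upperEnvelope a c v := by
    refine le_antisymm (le_upperEnvelope k v) ?_
    nlinarith [le_upperEnvelope (a := a) (c := c) l u]
  exact hlt.not_ge (hka ▸ le_activeSlope hkv)

lemma upperEnvelope_le_mul_activeSlope (hc : ∀ k, 0 ≤ c k) {u : ℝ} (hu : 0 ≤ u) :
    upperEnvelope a c u ≤ u * activeSlope a c u := by
  obtain ⟨k, hk, hka⟩ := exists_activeSlope_eq (a := a) (c := c) u
  nlinarith [hc k]

lemma eventuallyEq_upperEnvelope {k : ι} {u : ℝ} (hk : a k * u - c k = upperEnvelope a c u)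
    (hka : a k = activeSlope a c u) :
    upperEnvelope a c =ᶠ[𝓝[≥] u] fun s => a k * s - c k := by
  have hdom : ∀ᶠ s in 𝓝[≥] u, ∀ j, a j * s - c j ≤ a k * s - c k := by
    refine eventually_all.2 fun j => ?_
    by_cases hj : a j * u - c j = upperEnvelope a c u
    · have hjk : a j ≤ a k := hka ▸ le_activeSlope hj
      filter_upwards [self_mem_nhdsWithin] with s (hs : u ≤ s)
      nlinarith
    · have hlt : a j * u - c j < a k * u - c k := hk ▸ (le_upperEnvelope j u).lt_of_ne hj
      refine nhdsWithin_le_nhds ?_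
      filter_upwards [(by fun_prop : Continuous fun s => a j * s - c j).continuousAt.eventually_lt
        (by fun_prop : Continuous fun s => a k * s - c k).continuousAt hlt] with s hs
      exact hs.le
  filter_upwards [hdom] with s hs
  exact le_antisymm (sup'_le _ _ fun j _ => hs j) (le_upperEnvelope k s)

lemma hasDerivWithinAt_upperEnvelope (u : ℝ) :
    HasDerivWithinAt (upperEnvelope a c) (activeSlope a c u) (Ici u) u := by
  obtain ⟨k, hk, hka⟩ := exists_activeSlope_eq (a := a) (c := c) u
  have hline : HasDerivAt (fun s => a k * s - c k) (a k) u := by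
    simpa using ((hasDerivAt_id u).const_mul (a k)).sub_const (c k)
  rw [← hka]
  exact hline.hasDerivWithinAt.congr_of_eventuallyEq (eventuallyEq_upperEnvelope hk hka) hk.symm

lemma integral_mul_activeSlope_sub_upperEnvelope :
    ∫ u in (0 : ℝ)..1, (u * activeSlope a c u - upperEnvelope a c u) =
      upperEnvelope a c 1 - 2 * ∫ u in (0 : ℝ)..1, upperEnvelope a c u := by
  have hU : IntervalIntegrable (upperEnvelope a c) volume 0 1 :=
    continuous_upperEnvelope.intervalIntegrable 0 1
  have hqU : IntervalIntegrable (fun u => u * activeSlope a c u) volume 0 1 :=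
    monotone_activeSlope.intervalIntegrable.continuousOn_mul continuousOn_id
  have hFTC : ∫ u in (0 : ℝ)..1, (upperEnvelope a c u + u * activeSlope a c u) =
      1 * upperEnvelope a c 1 - 0 * upperEnvelope a c 0 := by
    refine intervalIntegral.integral_eq_sub_of_hasDeriv_right_of_le zero_le_one
      (continuous_id.mul continuous_upperEnvelope).continuousOn (fun u _ => ?_) (hU.add hqU)
    simpa using ((hasDerivWithinAt_id u (Ici u)).mul
      (hasDerivWithinAt_upperEnvelope u)).mono Ioi_subset_Ici_self
  rw [intervalIntegral.integral_add hU hqU] at hFTC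
  rw [intervalIntegral.integral_sub hqU hU]
  linarith

lemma integral_mul_activeSlope_sub_upperEnvelope_le {M : ℝ} (ha : ∀ k, a k ≤ M)
    (hU : ∀ u, 0 ≤ upperEnvelope a c u) :
    ∫ u in (0 : ℝ)..1, (u * activeSlope a c u - upperEnvelope a c u) ≤ M / 4 := by
  set U := upperEnvelope a c
  have hUint : ∀ s t : ℝ, IntervalIntegrable U volume s t :=
    continuous_upperEnvelope.intervalIntegrable
  have hlow : ∫ u in (0 : ℝ)..1 / 2, U u ≥ 0 :=
    intervalIntegral.integral_nonneg (by norm_num) fun u _ => hU u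
  -- on `[1/2, 1]`, bound `U` below by the steepest possible line through `(1, U 1)`
  have hhigh : ∫ u in (1 / 2 : ℝ)..1, (U 1 - M * (1 - u)) ≤ ∫ u in (1 / 2 : ℝ)..1, U u :=
    intervalIntegral.integral_mono_on (by norm_num)
      ((by fun_prop : Continuous fun u => U 1 - M * (1 - u)).intervalIntegrable _ _) (hUint _ _)
      fun u hu => upperEnvelope_sub_le ha hu.2
  have hline : ∫ u in (1 / 2 : ℝ)..1, (U 1 - M * (1 - u)) = U 1 / 2 - M / 8 := by
    have hsplit : (fun u : ℝ => U 1 - M * (1 - u)) = fun u => (U 1 - M) + M * u := by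
      ext; ring
    rw [hsplit, intervalIntegral.integral_add intervalIntegrable_const
        ((by fun_prop : Continuous fun u => M * u).intervalIntegrable _ _),
      intervalIntegral.integral_const, intervalIntegral.integral_const_mul, integral_id,
      smul_eq_mul]
    ring
  rw [integral_mul_activeSlope_sub_upperEnvelope,
    ← intervalIntegral.integral_add_adjacent_intervals (hUint 0 (1 / 2)) (hUint (1 / 2) 1)]
  linarith

end UpperEnvelope

section Uniform

lemma unif_zero_one : unif 0 1 = volume.restrict (Icc 0 1) := by
  simp [unif]

lemma isProbabilityMeasure_unif {b : ℝ} (hb : 0 < b) : IsProbabilityMeasure (unif 0 b) := by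
  constructor
  rw [unif, Measure.smul_apply, Measure.restrict_apply_univ, Real.volume_Icc, smul_eq_mul,
    sub_zero]
  exact ENNReal.inv_mul_cancel (by simpa using hb) ENNReal.ofReal_ne_top

lemma map_mul_left_unif_zero_one {b : ℝ} (hb : 0 < b) :
    (unif 0 1).map (fun u => b * u) = unif 0 b := by
  have hpre : (fun u : ℝ => b * u) ⁻¹' Icc 0 b = Icc 0 1 := by
    ext u
    simp only [mem_preimage, mem_Icc]
    constructor <;> rintro ⟨h₀, h₁⟩ <;> constructor <;> nlinarith
  have hemb : MeasurableEmbedding fun u : ℝ => b * u :=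
    (Homeomorph.mulLeft₀ b hb.ne').measurableEmbedding
  rw [unif_zero_one, unif, ← hpre, ← hemb.restrict_map,
    Real.map_volume_mul_left hb.ne', Measure.restrict_smul, abs_of_pos (inv_pos.2 hb), sub_zero,
    ENNReal.ofReal_inv_of_pos hb]

lemma unif_zero_apply_Ici {b x : ℝ} (hb : 0 < b) (hx₀ : 0 ≤ x) :
    unif 0 b (Ici x) = ENNReal.ofReal (1 - x / b) := by
  have hinter : Ici x ∩ Icc 0 b = Icc x b := by
    ext w
    simp only [mem_inter_iff, mem_Ici, mem_Icc]
    constructor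
    · rintro ⟨hxw, -, hwb⟩
      exact ⟨hxw, hwb⟩
    · rintro ⟨hxw, hwb⟩
      exact ⟨hxw, hx₀.trans hxw, hwb⟩
  rw [unif, Measure.smul_apply, smul_eq_mul, Measure.restrict_apply measurableSet_Ici, hinter,
    Real.volume_Icc, sub_zero, ← ENNReal.ofReal_inv_of_pos hb,
    ← ENNReal.ofReal_mul (inv_nonneg.2 hb.le)]
  congr 1
  field_simp

end Uniform

section Revenue

variable {n : ℕ}

lemma BuyerRule.revenue_single_price (B : BuyerRule n) (J : Fin n) {x : ℝ} (hx : 0 ≤ x)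
    (v : Fin n → ℝ) :
    B.revenue (fun i => if i = J then ENNReal.ofReal x else ⊤) v =
      {v : Fin n → ℝ | x ≤ v J}.indicator (fun _ => ENNReal.ofReal x) v := by
  set p : Fin n → ℝ≥0∞ := fun i => if i = J then ENNReal.ofReal x else ⊤
  rcases hc : B.choose v p with _ | j
  · have hvJ : ¬ x ≤ v J := fun hvJ => by
      simpa [hc] using B.active v p ⟨J, by simp [p], by simpa [p, hx] using hvJ⟩
    simp [BuyerRule.revenue, hc, hvJ]
  · obtain ⟨hfin, hle⟩ := B.feasible v p j hc
    obtain rfl : j = J := by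
      by_contra hne
      exact hfin (by simp [p, hne])
    have hvJ : x ≤ v j := by simpa [p, hx] using hle
    simp [BuyerRule.revenue, hc, hvJ, p]

lemma expRev_single_price (B : BuyerRule n) {marg : Fin n → Measure ℝ} {F : Measure (Fin n → ℝ)}
    (hF : Compatible marg F) (J : Fin n) {x : ℝ} (hx : 0 ≤ x) :
    expRev B (fun i => if i = J then ENNReal.ofReal x else ⊤) F =
      ENNReal.ofReal x * marg J (Ici x) := by
  have hset : MeasurableSet {v : Fin n → ℝ | x ≤ v J} :=
    measurableSet_le measurable_const (measurable_pi_apply J)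
  rw [expRev, lintegral_congr (B.revenue_single_price J hx), lintegral_indicator hset,
    setLIntegral_const, ← hF.2 J, Measure.map_apply (measurable_pi_apply J) measurableSet_Ici]
  rfl

/-- Under the comonotone valuation `v = u • b`, buying item `j` is the line `b j * u - p j`;
`none` is the outside option, and an item priced at `⊤` gets the outside option's line. -/
def menuSlope (b : Fin n → ℝ) (p : Fin n → ℝ≥0∞) : Option (Fin n) → ℝ
  | none => 0
  | some j => if p j = ⊤ then 0 else b j

def menuPrice (p : Fin n → ℝ≥0∞) : Option (Fin n) → ℝ
  | none => 0
  | some j => (p j).toReal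

lemma BuyerRule.revenue_comonotone_le (B : BuyerRule n) (p : Fin n → ℝ≥0∞) (b : Fin n → ℝ)
    {u : ℝ} (hu : 0 ≤ u) :
    B.revenue p (fun j => b j * u) ≤
      ENNReal.ofReal (u * activeSlope (menuSlope b p) (menuPrice p) u -
        upperEnvelope (menuSlope b p) (menuPrice p) u) := by
  rcases hc : B.choose (fun j => b j * u) p with _ | j
  · simp [BuyerRule.revenue, hc]
  obtain ⟨hfin, hle⟩ := B.feasible _ p j hc
  have hactive : menuSlope b p (some j) * u - menuPrice p (some j) =
      upperEnvelope (menuSlope b p) (menuPrice p) u := by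
    refine le_antisymm (le_upperEnvelope _ u) (Finset.sup'_le _ _ fun k _ => ?_)
    rcases k with _ | k
    · simpa [menuSlope, menuPrice, hfin] using hle
    · by_cases hk : p k = ⊤
      · simpa [menuSlope, menuPrice, hfin, hk] using hle
      · simpa [menuSlope, menuPrice, hfin, hk] using B.optimal _ p j k hc hk
  have hslope := le_activeSlope hactive
  simp only [menuSlope, menuPrice, hfin, if_false] at hactive hslope
  rw [BuyerRule.revenue, hc, Option.elim_some, ← ENNReal.ofReal_toReal hfin]
  exact ENNReal.ofReal_le_ofReal (by nlinarith)

lemma compatible_comonotone {b : Fin n → ℝ} (hb : ∀ j, 0 < b j) :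
    Compatible (fun j => unif 0 (b j)) ((unif 0 1).map fun u j => b j * u) := by
  have hmeas : Measurable fun (u : ℝ) (j : Fin n) => b j * u := by fun_prop
  have := isProbabilityMeasure_unif zero_lt_one
  refine ⟨Measure.isProbabilityMeasure_map hmeas.aemeasurable, fun j => ?_⟩
  rw [Measure.map_map (measurable_pi_apply j) hmeas]
  exact map_mul_left_unif_zero_one (hb j)

lemma expRev_comonotone_le (B : BuyerRule n) (p : Fin n → ℝ≥0∞) {b : Fin n → ℝ} {M : ℝ}
    (hM : 0 ≤ M) (hbM : ∀ j, b j ≤ M) :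
    expRev B p ((unif 0 1).map fun u j => b j * u) ≤ ENNReal.ofReal (M / 4) := by
  set f : ℝ → ℝ := fun u => u * activeSlope (menuSlope b p) (menuPrice p) u -
    upperEnvelope (menuSlope b p) (menuPrice p) u
  have hslope : ∀ k, menuSlope b p k ≤ M := by
    rintro (_ | j)
    · exact hM
    · simp only [menuSlope]; split_ifs <;> linarith [hbM j]
  have hprice : ∀ k, 0 ≤ menuPrice p k := by
    rintro (_ | j) <;> simp [menuPrice]
  have hf_int : IntegrableOn f (Icc 0 1) := by
    refine (intervalIntegrable_iff_integrableOn_Icc_of_le zero_le_one).1 ?_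
    exact (monotone_activeSlope.intervalIntegrable.continuousOn_mul continuousOn_id).sub
      (continuous_upperEnvelope.intervalIntegrable 0 1)
  have hf_nonneg : 0 ≤ᵐ[volume.restrict (Icc 0 1)] f :=
    ae_restrict_of_forall_mem measurableSet_Icc fun u hu =>
      sub_nonneg.2 (upperEnvelope_le_mul_activeSlope hprice hu.1)
  have hU_nonneg : ∀ u, 0 ≤ upperEnvelope (menuSlope b p) (menuPrice p) u := fun u => by
    simpa [menuSlope, menuPrice] using
      le_upperEnvelope (a := menuSlope b p) (c := menuPrice p) none u
  calc expRev B p ((unif 0 1).map fun u j => b j * u)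
      ≤ ∫⁻ u in Icc 0 1, B.revenue p (fun j => b j * u) := by
        rw [← unif_zero_one]; exact lintegral_map_le _ _
    _ ≤ ∫⁻ u in Icc 0 1, ENNReal.ofReal (f u) :=
        setLIntegral_mono' measurableSet_Icc fun u hu => B.revenue_comonotone_le p b hu.1
    _ = ENNReal.ofReal (∫ u in (0 : ℝ)..1, f u) := by
        rw [intervalIntegral.integral_of_le zero_le_one, ← integral_Icc_eq_integral_Ioc,
          ofReal_integral_eq_lintegral_ofReal hf_int hf_nonneg]
    _ ≤ ENNReal.ofReal (M / 4) :=
        ENNReal.ofReal_le_ofReal (integral_mul_activeSlope_sub_upperEnvelope_le hslope hU_nonneg)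

end Revenue

theorem single_price_max_min_optimal_for_standard_uniforms
    (n : ℕ) (hn : 0 < n) (B : BuyerRule n)
    (b : Fin n → ℝ) (hb : ∀ j, 0 < b j)
    (marg : Fin n → Measure ℝ) (hmarg : ∀ j, marg j = unif 0 (b j)) :
    ∃ (j : Fin n) (x : ℝ), 0 ≤ x ∧
      robustRev B marg (fun i => if i = j then ENNReal.ofReal x else ⊤) = optRobust B marg := by
  obtain rfl : marg = fun j => unif 0 (b j) := funext hmarg
  obtain ⟨J, -, hJ⟩ := Finset.exists_max_image Finset.univ b ⟨⟨0, hn⟩, Finset.mem_univ _⟩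
  have hM := hb J
  refine ⟨J, b J / 2, by positivity, le_antisymm (le_iSup _ _) ?_⟩
  have hhalf :
      ENNReal.ofReal (b J / 2) * unif 0 (b J) (Ici (b J / 2)) = ENNReal.ofReal (b J / 4) := by
    rw [unif_zero_apply_Ici hM (by positivity), ← ENNReal.ofReal_mul (by positivity)]
    congr 1
    field_simp
    ring
  calc optRobust B _ ≤ ENNReal.ofReal (b J / 4) :=
        iSup_le fun p => (iInf₂_le _ (compatible_comonotone hb)).trans
          (expRev_comonotone_le B p hM.le fun j => hJ j (Finset.mem_univ j))
    _ ≤ robustRev B _ _ :=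
        le_iInf₂ fun F hF => (expRev_single_price B hF J (by positivity)).trans hhalf |>.ge
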